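/- arXiv:1104.1970 — 8 statements merged into one kernel-verified Lean document; each statement's English description precedes it below -/
import Mathlib

section
/- Let C be a binary linear [n, n−r] code with full-rank r×n parity-check matrix H and generator matrix G, and let W ⊆ {1,…,n} with ℓ = #W. The system [S] (find x ∈ F_2^n with x Hᵀ = m and x_i = c_i for all i ∈ W) has a solution for every cover c ∈ F_2^n and every message m ∈ F_2^r if and only if rank(G_W) = ℓ, i.e. if and only if π_W(C) = F_2^W. -/
/-- The wet paper system [S] (x Hᵀ = m, x_i = c_i for i ∈ W) has a
solution for every cover c and every message m iff rank(G_W) = #W, iff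
π_W(C) = F_2^W. -/
theorem stmt_1 (n r : ℕ)
    (C : Submodule (ZMod 2) (Fin n → ZMod 2))
    (hdim : Module.finrank (ZMod 2) C = n - r)
    (H : Matrix (Fin r) (Fin n) (ZMod 2)) (hHrank : H.rank = r)
    (hHC : ∀ x : Fin n → ZMod 2, x ∈ C ↔ H.mulVec x = 0)
    (G : Matrix (Fin (n - r)) (Fin n) (ZMod 2))
    (hind : LinearIndependent (ZMod 2) (fun i => G i))
    (hspan : Submodule.span (ZMod 2) (Set.range fun i => G i) = C)
    (W : Finset (Fin n)) :
    ((∀ (c : Fin n → ZMod 2) (m : Fin r → ZMod 2),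
        ∃ x : Fin n → ZMod 2, H.mulVec x = m ∧ ∀ i ∈ W, x i = c i) ↔
      (G.submatrix id (fun j : W => j.1)).rank = W.card) ∧
    ((∀ (c : Fin n → ZMod 2) (m : Fin r → ZMod 2),
        ∃ x : Fin n → ZMod 2, H.mulVec x = m ∧ ∀ i ∈ W, x i = c i) ↔
      (fun x : Fin n → ZMod 2 => fun i : W => x i.1) '' (C : Set (Fin n → ZMod 2)) = Set.univ) := by
  classical
  set L : (Fin n → ZMod 2) →ₗ[ZMod 2] (W → ZMod 2) :=
    LinearMap.funLeft (ZMod 2) (ZMod 2) (fun i : W => i.1) with hLdef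
  -- π_W(C) is the row space of G_W
  have hmap : Submodule.map L C = Submodule.span (ZMod 2)
      (Set.range fun i => (G.submatrix id (fun j : W => j.1)) i) := by
    rw [← hspan, Submodule.map_span, ← Set.range_comp]
    rfl
  -- rank iff full projection
  have hrank_iff : (G.submatrix id (fun j : W => j.1)).rank = W.card ↔
      Submodule.map L C = ⊤ := by
    rw [hmap, Matrix.rank_eq_finrank_span_row]
    constructor
    · intro h
      apply Submodule.eq_top_of_finrank_eq
      erw [h, Module.finrank_fintype_fun_eq_card, Fintype.card_coe]
    · intro h
      erw [h, finrank_top, Module.finrank_fintype_fun_eq_card, Fintype.card_coe]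
  -- H surjective
  have hHsurj : ∀ m : Fin r → ZMod 2, ∃ x, H.mulVec x = m := by
    have hrange : LinearMap.range H.mulVecLin = ⊤ := by
      apply Submodule.eq_top_of_finrank_eq
      rw [Module.finrank_fintype_fun_eq_card, Fintype.card_fin]
      exact hHrank
    intro m
    obtain ⟨x, hx⟩ := (LinearMap.range_eq_top.mp hrange) m
    exact ⟨x, hx⟩
  -- solvability iff full projection
  have hsolv_iff : (∀ (c : Fin n → ZMod 2) (m : Fin r → ZMod 2),
        ∃ x : Fin n → ZMod 2, H.mulVec x = m ∧ ∀ i ∈ W, x i = c i) ↔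
      Submodule.map L C = ⊤ := by
    constructor
    · intro h
      rw [Submodule.eq_top_iff']
      intro t
      obtain ⟨x, hx0, hxW⟩ := h (fun i => if hi : i ∈ W then t ⟨i, hi⟩ else 0) 0
      refine ⟨x, (hHC x).mpr hx0, ?_⟩
      funext i
      have := hxW i.1 i.2
      simp only [hLdef, LinearMap.funLeft_apply, Function.comp]
      rw [this, dif_pos i.2]
    · intro h c m
      obtain ⟨x0, hx0⟩ := hHsurj m
      have ht : (L (c - x0) : W → ZMod 2) ∈ Submodule.map L C := h ▸ Submodule.mem_top
      obtain ⟨y, hyC, hy⟩ := ht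
      refine ⟨x0 + y, ?_, ?_⟩
      · rw [Matrix.mulVec_add, hx0, (hHC y).mp hyC, add_zero]
      · intro i hi
        have := congrFun hy ⟨i, hi⟩
        simp only [hLdef, LinearMap.funLeft_apply, Function.comp] at this
        simp only [Pi.add_apply, Pi.sub_apply] at this ⊢
        rw [this]; ring
  have himg : ((fun x : Fin n → ZMod 2 => fun i : W => x i.1) ''
      (C : Set (Fin n → ZMod 2)) = Set.univ) ↔ Submodule.map L C = ⊤ := by
    constructor
    · intro h
      rw [Submodule.eq_top_iff']
      intro t
      have : t ∈ (fun x : Fin n → ZMod 2 => fun i : W => x i.1) '' (C : Set _) := by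
        rw [h]; trivial
      obtain ⟨x, hxC, hx⟩ := this
      exact ⟨x, hxC, hx⟩
    · intro h
      rw [Set.eq_univ_iff_forall]
      intro t
      have : t ∈ Submodule.map L C := h ▸ Submodule.mem_top
      obtain ⟨x, hxC, hx⟩ := this
      exact ⟨x, hxC, hx⟩
  exact ⟨hsolv_iff.trans hrank_iff.symm, hsolv_iff.trans himg.symm⟩
end

section
/- Let C be a binary linear [n, n−r] code with full-rank r×n parity-check matrix H, let d⊥ denote the minimum Hamming distance of the dual code C⊥, and let 0 ≤ δ ≤ n. The system [S] has a solution for every c ∈ F_2^n, every m ∈ F_2^r and every W ⊆ {1,…,n} with #W = n−δ, if and only if δ ≥ n − d⊥ + 1. -/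
open Matrix Module

/-- The dual code C⊥ = {y : ⟨y,c⟩ = 0 for all c ∈ C}. -/
def dualCode (n : ℕ) (C : Submodule (ZMod 2) (Fin n → ZMod 2)) :
    Submodule (ZMod 2) (Fin n → ZMod 2) where
  carrier := {y | ∀ c ∈ C, dotProduct y c = 0}
  add_mem' := by
    intro a b ha hb c hc
    simp [add_dotProduct, ha c hc, hb c hc]
  zero_mem' := by
    intro c hc
    simp
  smul_mem' := by
    intro t a ha c hc
    simp [smul_dotProduct, ha c hc]

lemma mem_dualCode {n : ℕ} {V : Submodule (ZMod 2) (Fin n → ZMod 2)}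
    {y : Fin n → ZMod 2} : y ∈ dualCode n V ↔ ∀ v ∈ V, dotProduct y v = 0 :=
  Iff.rfl

/-- dot-with functional as linear map -/
noncomputable def toDualL (n : ℕ) : (Fin n → ZMod 2) →ₗ[ZMod 2] Module.Dual (ZMod 2) (Fin n → ZMod 2) where
  toFun u :=
    { toFun := fun x => dotProduct u x
      map_add' := fun a b => by simp [dotProduct_add]
      map_smul' := fun t a => by simp [dotProduct_smul] }
  map_add' a b := by ext x; simp [add_dotProduct]
  map_smul' t a := by ext x; simp [smul_dotProduct]

lemma toDualL_surj (n : ℕ) : Function.Surjective (toDualL n) := by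
  intro φ
  refine ⟨fun i => φ (Pi.single i 1), ?_⟩
  refine (Pi.basisFun (ZMod 2) (Fin n)).ext fun i => ?_
  simp [toDualL, Pi.basisFun_apply, dotProduct_single]

lemma finrank_dualCode (n : ℕ) (V : Submodule (ZMod 2) (Fin n → ZMod 2)) :
    finrank (ZMod 2) (dualCode n V) + finrank (ZMod 2) V = n := by
  classical
  let Φ : (Fin n → ZMod 2) →ₗ[ZMod 2] Module.Dual (ZMod 2) V :=
    (V.subtype.dualMap).comp (toDualL n)
  have hker : LinearMap.ker Φ = dualCode n V := by
    ext u
    constructor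
    · intro hu v hv
      have h0 : Φ u = 0 := hu
      have := congrArg (fun f => f ⟨v, hv⟩) h0
      simpa [Φ, toDualL] using this
    · intro hu
      have : Φ u = 0 := by
        ext v
        exact hu v.1 v.2
      exact this
  have hsurj : Function.Surjective Φ := by
    intro g
    obtain ⟨gext, hgext⟩ := LinearMap.exists_extend g
    obtain ⟨u, hu⟩ := toDualL_surj n gext
    refine ⟨u, ?_⟩
    simp only [Φ, LinearMap.comp_apply, hu]
    exact hgext ▸ rfl
  have hrn := LinearMap.finrank_range_add_finrank_ker Φ
  rw [LinearMap.range_eq_top.mpr hsurj, finrank_top, hker] at hrn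
  rw [Subspace.dual_finrank_eq] at hrn
  rw [Module.finrank_pi, Fintype.card_fin] at hrn
  omega

lemma dualCode_dualCode (n : ℕ) (V : Submodule (ZMod 2) (Fin n → ZMod 2)) :
    dualCode n (dualCode n V) = V := by
  have hle : V ≤ dualCode n (dualCode n V) := by
    intro v hv y hy
    rw [dotProduct_comm]
    exact hy v hv
  have h1 := finrank_dualCode n V
  have h2 := finrank_dualCode n (dualCode n V)
  exact (Submodule.eq_of_le_of_finrank_le hle (by omega)).symm

lemma eq_zero_of_forall_dot {n : ℕ} {w : Fin n → ZMod 2}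
    (h : ∀ u : Fin n → ZMod 2, dotProduct u w = 0) : w = 0 := by
  funext i
  have := h (Pi.single i 1)
  simpa [single_dotProduct] using this

lemma exists_perp {n : ℕ} {V : Submodule (ZMod 2) (Fin n → ZMod 2)} (hV : V ≠ ⊤) :
    ∃ u, u ≠ 0 ∧ u ∈ dualCode n V := by
  have hlt : finrank (ZMod 2) V < n := by
    have := Submodule.finrank_lt (K := ZMod 2) (V := Fin n → ZMod 2)
      hV
    rwa [Module.finrank_pi, Fintype.card_fin] at this
  have h1 := finrank_dualCode n V
  have hne : dualCode n V ≠ ⊥ := by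
    intro h
    rw [h, finrank_bot] at h1
    omega
  obtain ⟨u, hu, hune⟩ := Submodule.ne_bot_iff _ |>.mp hne
  exact ⟨u, hune, hu⟩

section Main

variable {n r : ℕ} (H : Matrix (Fin r) (Fin n) (ZMod 2))

lemma C_eq_dual_row (C : Submodule (ZMod 2) (Fin n → ZMod 2))
    (hHC : ∀ x : Fin n → ZMod 2, x ∈ C ↔ H.mulVec x = 0) :
    C = dualCode n (LinearMap.range (Matrix.mulVecLin Hᵀ)) := by
  ext x
  rw [hHC, mem_dualCode]
  constructor
  · rintro hx v ⟨u, rfl⟩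
    rw [dotProduct_comm]
    simp only [Matrix.mulVecLin_apply, Matrix.mulVec_transpose]
    rw [← Matrix.dotProduct_mulVec, hx, dotProduct_zero]
  · intro hx
    apply eq_zero_of_forall_dot
    intro u
    rw [Matrix.dotProduct_mulVec, ← Matrix.mulVec_transpose, dotProduct_comm]
    exact hx _ ⟨u, rfl⟩

lemma dual_eq_row (C : Submodule (ZMod 2) (Fin n → ZMod 2))
    (hHC : ∀ x : Fin n → ZMod 2, x ∈ C ↔ H.mulVec x = 0) :
    dualCode n C = LinearMap.range (Matrix.mulVecLin Hᵀ) := by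
  rw [C_eq_dual_row H C hHC, dualCode_dualCode]

lemma vecMul_inj (hHrank : H.rank = r) {u : Fin r → ZMod 2}
    (hu : Hᵀ.mulVec u = 0) : u = 0 := by
  have hrk : Hᵀ.rank = r := by rw [Matrix.rank_transpose, hHrank]
  have hrn := LinearMap.finrank_range_add_finrank_ker (Matrix.mulVecLin Hᵀ)
  rw [Module.finrank_pi, Fintype.card_fin] at hrn
  have hrange : finrank (ZMod 2) (LinearMap.range (Matrix.mulVecLin Hᵀ)) = r := hrk
  have hker0 : finrank (ZMod 2) (LinearMap.ker (Matrix.mulVecLin Hᵀ)) = 0 := by omega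
  have hbot : LinearMap.ker (Matrix.mulVecLin Hᵀ) = ⊥ :=
    Submodule.finrank_eq_zero.mp hker0
  have : u ∈ LinearMap.ker (Matrix.mulVecLin Hᵀ) := hu
  rwa [hbot, Submodule.mem_bot] at this

/-- subspace of vectors vanishing on W -/
def zeroOn (n : ℕ) (W : Finset (Fin n)) : Submodule (ZMod 2) (Fin n → ZMod 2) where
  carrier := {z | ∀ i ∈ W, z i = 0}
  add_mem' := by intro a b ha hb i hi; simp [ha i hi, hb i hi]
  zero_mem' := by intro i _; rfl
  smul_mem' := by intro t a ha i hi; simp [ha i hi]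

end Main

/-- the system [S] has a solution for every c, m and every W with
#W = n−δ, if and only if δ ≥ n − d⊥ + 1, where d⊥ is the minimum distance of
the dual code. -/
theorem stmt_4 (n r δ : ℕ) (hδ : δ ≤ n)
    (C : Submodule (ZMod 2) (Fin n → ZMod 2))
    (hdim : Module.finrank (ZMod 2) C = n - r)
    (H : Matrix (Fin r) (Fin n) (ZMod 2)) (hHrank : H.rank = r)
    (hHC : ∀ x : Fin n → ZMod 2, x ∈ C ↔ H.mulVec x = 0)
    (dperp : ℕ)
    (hdperp : IsLeast {k | ∃ y : Fin n → ZMod 2, y ∈ dualCode n C ∧ y ≠ 0 ∧ hammingNorm y = k} dperp) :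
    (∀ (c : Fin n → ZMod 2) (m : Fin r → ZMod 2) (W : Finset (Fin n)), W.card = n - δ →
        ∃ x : Fin n → ZMod 2, H.mulVec x = m ∧ ∀ i ∈ W, x i = c i) ↔
      δ ≥ n - dperp + 1 := by
  classical
  have hdual := dual_eq_row H C hHC
  constructor
  · -- solvability → δ ≥ n - dperp + 1
    intro hsol
    by_contra hlt
    push_neg at hlt
    have hsmall : δ ≤ n - dperp := by omega
    obtain ⟨y, hyd, hyne, hynorm⟩ := hdperp.1
    have hdn : dperp ≤ n := by
      rw [← hynorm]
      simpa using hammingNorm_le_card_fintype (x := y)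
    -- support of y
    set S : Finset (Fin n) := Finset.univ.filter (fun i => y i ≠ 0) with hS
    have hScard : S.card = dperp := hynorm
    obtain ⟨W, hSW, hWcard⟩ := Finset.exists_superset_card_eq
      (n := n - δ) (s := S) (by omega) (by simpa using Nat.sub_le n δ)
    -- y is in the row space
    have hyR : y ∈ LinearMap.range (Matrix.mulVecLin Hᵀ) := hdual ▸ hyd
    obtain ⟨u, hu⟩ := hyR
    have hune : u ≠ 0 := by
      rintro rfl
      exact hyne (by simpa using hu.symm)
    obtain ⟨j, hj⟩ := Function.ne_iff.mp hune
    obtain ⟨x, hx1, hx2⟩ := hsol 0 (Pi.single j 1) W hWcard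
    have hzero : dotProduct u (Pi.single j 1) = 0 := by
      rw [← hx1, Matrix.dotProduct_mulVec, ← Matrix.mulVec_transpose]
      rw [Matrix.mulVecLin_apply] at hu
      rw [hu]
      apply Finset.sum_eq_zero
      intro i _
      by_cases hyi : y i = 0
      · simp [hyi]
      · have hiS : i ∈ S := by simp [hS, hyi]
        have := hx2 i (hSW hiS)
        simp [this]
    rw [dotProduct_single, mul_one] at hzero
    exact hj (by simpa using hzero)
  · -- δ ≥ n - dperp + 1 → solvability
    intro hge c m W hW
    set V' : Submodule (ZMod 2) (Fin r → ZMod 2) :=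
      Submodule.map (Matrix.mulVecLin H) (zeroOn n W) with hV'
    have hVtop : V' = ⊤ := by
      by_contra hVne
      obtain ⟨u, hune, hu⟩ := exists_perp hVne
      set y : Fin n → ZMod 2 := Hᵀ.mulVec u with hy
      have hyne : y ≠ 0 := fun h => hune (vecMul_inj H hHrank h)
      have hyd : y ∈ dualCode n C := by
        rw [hdual]
        exact ⟨u, rfl⟩
      have hsupp : ∀ i ∉ W, y i = 0 := by
        intro i hi
        have hz : (Pi.single i 1 : Fin n → ZMod 2) ∈ zeroOn n W := by
          intro j hj
          have : j ≠ i := fun h => hi (h ▸ hj)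
          simp [Pi.single_apply, this]
        have h0 := hu _ ⟨Pi.single i 1, hz, rfl⟩
        rw [Matrix.mulVecLin_apply, Matrix.dotProduct_mulVec,
          ← Matrix.mulVec_transpose, ← hy,
          dotProduct_single, mul_one] at h0
        exact h0
      have hnorm : hammingNorm y ≤ W.card := by
        apply Finset.card_le_card
        intro i hi
        simp only [Finset.mem_filter] at hi
        by_contra hiW
        exact hi.2 (hsupp i hiW)
      have hdle : dperp ≤ n - δ := by
        have := hdperp.2 ⟨y, hyd, hyne, rfl⟩
        omega
      have hdn : dperp ≤ n := by omega
      omega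
    have hmem : m - H.mulVec c ∈ V' := hVtop ▸ Submodule.mem_top
    obtain ⟨z, hz, hHz⟩ := hmem
    refine ⟨c + z, ?_, ?_⟩
    · rw [Matrix.mulVec_add]
      rw [Matrix.mulVecLin_apply] at hHz
      rw [hHz]
      abel
    · intro i hi
      simp [hz i hi]
end

section
/- Let C be a binary linear [n, n−r] code with full-rank r×n parity-check matrix H, let d⊥ be the minimum Hamming distance of the dual code C⊥, and suppose δ ≥ n − d⊥ + 1. Then for every c ∈ F_2^n, every m ∈ F_2^r and every W ⊆ {1,…,n} with #W = n−δ, the set of solutions {x ∈ F_2^n : x Hᵀ = m and x_i = c_i for all i ∈ W} has exactly 2^{δ−r} elements. -/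
/-- if δ ≥ n − d⊥ + 1 then for every c, m and every W with
#W = n−δ, the system [S] has exactly 2^{δ−r} solutions. -/
theorem stmt_5 (n r δ : ℕ) (hδ : δ ≤ n)
    (C : Submodule (ZMod 2) (Fin n → ZMod 2))
    (hdim : Module.finrank (ZMod 2) C = n - r)
    (H : Matrix (Fin r) (Fin n) (ZMod 2)) (hHrank : H.rank = r)
    (hHC : ∀ x : Fin n → ZMod 2, x ∈ C ↔ H.mulVec x = 0)
    (dperp : ℕ)
    (hdperp : IsLeast {k | ∃ y : Fin n → ZMod 2, y ∈ dualCode n C ∧ y ≠ 0 ∧ hammingNorm y = k} dperp)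
    (hδd : δ ≥ n - dperp + 1) :
    ∀ (c : Fin n → ZMod 2) (m : Fin r → ZMod 2) (W : Finset (Fin n)), W.card = n - δ →
      Nat.card {x : Fin n → ZMod 2 | H.mulVec x = m ∧ ∀ i ∈ W, x i = c i} = 2 ^ (δ - r) := by
  classical
  intro c m W hW
  haveI : Fact (Nat.Prime 2) := ⟨Nat.prime_two⟩
  -- the combined matrix
  set M : Matrix (Fin r ⊕ {i // i ∈ W}) (Fin n) (ZMod 2) :=
    Matrix.of (fun p i => Sum.elim (fun j => H j i)
      (fun (w : {i // i ∈ W}) => if (w : Fin n) = i then (1 : ZMod 2) else 0) p) with hM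
  -- injectivity of the transpose
  have hvecinj : ∀ u : Fin r ⊕ {i // i ∈ W} → ZMod 2, Matrix.vecMul u M = 0 → u = 0 := by
    intro u hu
    set a : Fin r → ZMod 2 := fun j => u (Sum.inl j) with ha
    set b : {i // i ∈ W} → ZMod 2 := fun w => u (Sum.inr w) with hb
    set y : Fin n → ZMod 2 := Matrix.vecMul a H with hy
    have hcompute : ∀ i : Fin n,
        Matrix.vecMul u M i = y i + (if h : i ∈ W then b ⟨i, h⟩ else 0) := by
      intro i
      have h2 : (∑ w : {i // i ∈ W}, b w * (if (w : Fin n) = i then (1:ZMod 2) else 0))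
          = (if h : i ∈ W then b ⟨i, h⟩ else 0) := by
        by_cases h : i ∈ W
        · rw [dif_pos h]
          rw [Finset.sum_eq_single (⟨i, h⟩ : {i // i ∈ W})]
          · simp
          · intro w _ hw
            have : (w : Fin n) ≠ i := fun e => hw (Subtype.ext e)
            simp [this]
          · simp
        · rw [dif_neg h]
          apply Finset.sum_eq_zero
          intro w _
          have : (w : Fin n) ≠ i := fun e => h (e ▸ w.2)
          simp [this]
      calc Matrix.vecMul u M i = ∑ p, u p * M p i := by
            simp [Matrix.vecMul, dotProduct]
        _ = (∑ j : Fin r, a j * H j i)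
              + ∑ w : {i // i ∈ W}, b w * (if (w : Fin n) = i then (1:ZMod 2) else 0) := by
            rw [Fintype.sum_sum_type]; rfl
        _ = y i + (if h : i ∈ W then b ⟨i, h⟩ else 0) := by
            rw [h2]
            congr 1
    -- y vanishes outside W
    have hyW : ∀ i : Fin n, i ∉ W → y i = 0 := by
      intro i hi
      have := hcompute i
      rw [hu] at this
      simpa [dif_neg hi] using this.symm
    -- y is in the dual code
    have hydual : y ∈ dualCode n C := by
      intro cc hcc
      have h0 : H.mulVec cc = 0 := (hHC cc).1 hcc
      rw [hy, ← Matrix.dotProduct_mulVec, h0, dotProduct_zero]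
    -- y has small weight
    have hynorm : hammingNorm y ≤ n - δ := by
      rw [← hW]
      apply Finset.card_le_card
      intro i hi
      simp only [Finset.mem_filter] at hi
      by_contra hiW
      exact hi.2 (hyW i hiW)
    -- hence y = 0
    have hy0 : y = 0 := by
      by_contra hy0
      have hle : dperp ≤ hammingNorm y := hdperp.2 ⟨y, hydual, hy0, rfl⟩
      omega
    -- a = 0 since H has full row rank
    have ha0 : a = 0 := by
      have hkt : H.transpose.rank = r := by rw [Matrix.rank_transpose]; exact hHrank
      have hker : LinearMap.ker H.transpose.mulVecLin = ⊥ := by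
        have hrn := LinearMap.finrank_range_add_finrank_ker H.transpose.mulVecLin
        rw [Module.finrank_pi, Fintype.card_fin] at hrn
        have hrange : Module.finrank (ZMod 2) (LinearMap.range H.transpose.mulVecLin) = r := hkt
        rw [← Submodule.finrank_eq_zero (R := ZMod 2)
          (S := LinearMap.ker H.transpose.mulVecLin)]
        omega
      have : H.transpose.mulVecLin a = 0 := by
        rw [Matrix.mulVecLin_apply, Matrix.mulVec_transpose, ← hy, hy0]
      have := LinearMap.ker_eq_bot.mp hker
      exact this (by simpa using ‹H.transpose.mulVecLin a = 0›)
    -- b = 0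
    have hb0 : b = 0 := by
      funext w
      have := hcompute (w : Fin n)
      rw [hu, hy0] at this
      simp only [Pi.zero_apply, zero_add, dif_pos w.2] at this
      have hw : (⟨(w : Fin n), w.2⟩ : {i // i ∈ W}) = w := Subtype.ext rfl
      rw [hw] at this
      exact this.symm
    funext p
    cases p with
    | inl j => exact congrFun ha0 j
    | inr w => exact congrFun hb0 w
  -- rank of M
  have hcard : Fintype.card (Fin r ⊕ {i // i ∈ W}) = r + (n - δ) := by
    simp [Fintype.card_coe, hW]
  have hMrank : M.rank = r + (n - δ) := by
    have hinj : Function.Injective M.transpose.mulVecLin := by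
      rw [← LinearMap.ker_eq_bot, LinearMap.ker_eq_bot']
      intro u hu
      apply hvecinj
      simpa using hu
    have : M.transpose.rank = r + (n - δ) := by
      rw [Matrix.rank, LinearMap.finrank_range_of_inj hinj, Module.finrank_pi, hcard]
    rw [← Matrix.rank_transpose]; exact this
  -- surjectivity of mulVec M
  have hsurj : Function.Surjective M.mulVecLin := by
    rw [← LinearMap.range_eq_top]
    apply Submodule.eq_top_of_finrank_eq
    rw [Module.finrank_pi, hcard]
    exact hMrank
  -- kernel cardinality
  have hrange_le : r + (n - δ) ≤ n := by
    have := LinearMap.finrank_range_add_finrank_ker M.mulVecLin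
    rw [Module.finrank_pi, Fintype.card_fin] at this
    have hr : Module.finrank (ZMod 2) (LinearMap.range M.mulVecLin) = r + (n - δ) := hMrank
    omega
  have hkerfin : Module.finrank (ZMod 2) (LinearMap.ker M.mulVecLin) = δ - r := by
    have := LinearMap.finrank_range_add_finrank_ker M.mulVecLin
    rw [Module.finrank_pi, Fintype.card_fin] at this
    have hr : Module.finrank (ZMod 2) (LinearMap.range M.mulVecLin) = r + (n - δ) := hMrank
    omega
  have hkercard : Nat.card (LinearMap.ker M.mulVecLin) = 2 ^ (δ - r) := by
    haveI : Fintype (LinearMap.ker M.mulVecLin) := Fintype.ofFinite _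
    rw [Nat.card_eq_fintype_card, Module.card_eq_pow_finrank (K := ZMod 2), ZMod.card, hkerfin]
  -- identify the solution set with a fiber
  set v : Fin r ⊕ {i // i ∈ W} → ZMod 2 := Sum.elim m (fun w => c w) with hv
  have hmul : ∀ x : Fin n → ZMod 2,
      (H.mulVec x = m ∧ ∀ i ∈ W, x i = c i) ↔ M.mulVec x = v := by
    intro x
    constructor
    · rintro ⟨h1, h2⟩
      funext p
      cases p with
      | inl j =>
        have : M.mulVec x (Sum.inl j) = H.mulVec x j := by
          simp [hM, Matrix.mulVec, dotProduct]
        rw [this, h1]; rfl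
      | inr w =>
        have : M.mulVec x (Sum.inr w) = x w := by
          simp [hM, Matrix.mulVec, dotProduct, boole_mul]
        rw [this]
        exact h2 w w.2
    · intro h
      constructor
      · funext j
        have := congrFun h (Sum.inl j)
        simpa [hM, Matrix.mulVec, dotProduct, hv] using this
      · intro i hi
        have := congrFun h (Sum.inr ⟨i, hi⟩)
        simpa [hM, Matrix.mulVec, dotProduct, hv, boole_mul] using this
  obtain ⟨x0, hx0⟩ := hsurj v
  have hx0' : M.mulVec x0 = v := hx0
  have hequiv : {x : Fin n → ZMod 2 | H.mulVec x = m ∧ ∀ i ∈ W, x i = c i}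
      ≃ LinearMap.ker M.mulVecLin := by
    refine ⟨fun x => ⟨x.1 - x0, ?_⟩, fun y => ⟨y.1 + x0, ?_⟩, ?_, ?_⟩
    · rw [LinearMap.mem_ker, map_sub]
      have hx := (hmul x.1).1 x.2
      simp only [Matrix.mulVecLin_apply]
      rw [hx, hx0', sub_self]
    · apply (hmul _).2
      have hy := y.2
      rw [LinearMap.mem_ker] at hy
      have : M.mulVec (y.1 + x0) = M.mulVec y.1 + M.mulVec x0 := by
        rw [← Matrix.mulVecLin_apply, ← Matrix.mulVecLin_apply, ← Matrix.mulVecLin_apply, map_add]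
      rw [this]
      have hy' : M.mulVec y.1 = 0 := hy
      rw [hy', hx0', zero_add]
    · intro x; ext i; simp
    · intro y; ext i; simp
  rw [Nat.card_congr hequiv, hkercard]
end

section
/- Let C be a binary linear [n, n−r] code with full-rank r×n parity-check matrix H and generator matrix G, and fix W ⊆ {1,…,n} with #W = n−δ. Then the number of pairs (c, m) ∈ F_2^n × F_2^r for which the system [S] (x Hᵀ = m, x_i = c_i for i ∈ W) has a solution equals 2^{n+r} · 2^{rank(G_W) − (n−δ)}; equivalently, for uniformly random c and m the probability that [S] is solvable is 2^{rank(G_W) − (n−δ)}. -/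
/-- for fixed W with #W = n−δ, the number of pairs (c,m) for which
the system [S] is solvable equals 2^{n+r}·2^{rank(G_W)−(n−δ)}; equivalently the
probability of solvability for uniform (c,m) is 2^{rank(G_W)−(n−δ)}. -/
theorem stmt_6 (n r δ : ℕ) (hδ : δ ≤ n)
    (C : Submodule (ZMod 2) (Fin n → ZMod 2))
    (hdim : Module.finrank (ZMod 2) C = n - r)
    (H : Matrix (Fin r) (Fin n) (ZMod 2)) (hHrank : H.rank = r)
    (hHC : ∀ x : Fin n → ZMod 2, x ∈ C ↔ H.mulVec x = 0)
    (G : Matrix (Fin (n - r)) (Fin n) (ZMod 2))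
    (hind : LinearIndependent (ZMod 2) (fun i => G i))
    (hspan : Submodule.span (ZMod 2) (Set.range fun i => G i) = C)
    (W : Finset (Fin n)) (hW : W.card = n - δ) :
    (Nat.card {p : (Fin n → ZMod 2) × (Fin r → ZMod 2) |
        ∃ x : Fin n → ZMod 2, H.mulVec x = p.2 ∧ ∀ i ∈ W, x i = p.1 i} : ℝ) =
      2 ^ (n + r) *
        (2 : ℝ) ^ (((G.submatrix id (fun j : W => j.1)).rank : ℤ) - ((n : ℤ) - (δ : ℤ))) ∧
    (Nat.card {p : (Fin n → ZMod 2) × (Fin r → ZMod 2) |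
        ∃ x : Fin n → ZMod 2, H.mulVec x = p.2 ∧ ∀ i ∈ W, x i = p.1 i} : ℝ) / 2 ^ (n + r) =
      (2 : ℝ) ^ (((G.submatrix id (fun j : W => j.1)).rank : ℤ) - ((n : ℤ) - (δ : ℤ))) := by
  classical
  set ρ := (G.submatrix id (fun j : W => j.1)).rank with hρdef
  -- restriction linear map
  set res : (Fin n → ZMod 2) →ₗ[ZMod 2] (W → ZMod 2) :=
    LinearMap.funLeft (ZMod 2) (ZMod 2) (fun j : W => (j : Fin n)) with hres
  -- H.mulVec is surjective
  have hsurj : Function.Surjective H.mulVec := by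
    have htop : LinearMap.range H.mulVecLin = ⊤ := by
      apply Submodule.eq_top_of_finrank_eq
      have h1 : Module.finrank (ZMod 2) (LinearMap.range H.mulVecLin) = H.rank := rfl
      rw [h1, hHrank, Module.finrank_pi, Fintype.card_fin]
    intro m
    obtain ⟨x, hx⟩ := LinearMap.range_eq_top.mp htop m
    exact ⟨x, hx⟩
  choose σ hσ using hsurj
  -- the image subspace
  have hmap : C.map res =
      Submodule.span (ZMod 2) (Set.range fun i => (G.submatrix id (fun j : W => (j : Fin n))) i) := by
    rw [← hspan, Submodule.map_span]
    congr 1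
    rw [← Set.range_comp]
    rfl
  have hfr : Module.finrank (ZMod 2) (C.map res) = ρ := by
    rw [hmap, hρdef, Matrix.rank_eq_finrank_span_row]
    rfl
  -- cardinality of the image subspace
  have hcardU : Nat.card (C.map res) = 2 ^ ρ := by
    rw [Nat.card_eq_fintype_card, Module.card_eq_pow_finrank (K := ZMod 2), ZMod.card, hfr]
  -- the bijection
  set S : Set ((Fin n → ZMod 2) × (Fin r → ZMod 2)) :=
    {p | ∃ x : Fin n → ZMod 2, H.mulVec x = p.2 ∧ ∀ i ∈ W, x i = p.1 i} with hS
  have e : ((Fin r → ZMod 2) × ((↥(Wᶜ) : Type) → ZMod 2) × (C.map res)) ≃ S := by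
    refine
      { toFun := fun t => ⟨(fun i => if h : i ∈ W then σ t.1 i + t.2.2.1 ⟨i, h⟩
          else t.2.1 ⟨i, Finset.mem_compl.mpr h⟩, t.1), ?_⟩
        invFun := fun p => (p.1.2, fun i => p.1.1 i.1,
          ⟨fun j => p.1.1 j.1 - σ p.1.2 j.1, ?_⟩)
        left_inv := ?_
        right_inv := ?_ }
    · -- membership in S
      obtain ⟨m, u, v⟩ := t
      obtain ⟨z, hz, hzv⟩ := v.2
      refine ⟨σ m + z, ?_, ?_⟩
      · rw [Matrix.mulVec_add, hσ, (hHC z).mp hz, add_zero]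
      · intro i hi
        simp only [Pi.add_apply, dif_pos hi]
        congr 1
        rw [← hzv]
        rfl
    · -- membership in C.map res
      obtain ⟨x, hx1, hx2⟩ := p.2
      refine ⟨x - σ p.1.2, (hHC _).mpr ?_, ?_⟩
      · rw [Matrix.mulVec_sub, hx1, hσ, sub_self]
      · funext j
        show x j.1 - σ p.1.2 j.1 = _
        rw [hx2 j.1 j.2]
    · -- left inverse
      rintro ⟨m, u, v⟩
      refine Prod.ext rfl (Prod.ext ?_ ?_)
      · funext i
        have hi : (i : Fin n) ∉ W := Finset.mem_compl.mp i.2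
        simp only [dif_neg hi]
      · apply Subtype.ext
        funext j
        show (if h : (j : Fin n) ∈ W then σ m j.1 + v.1 ⟨j.1, h⟩
          else u ⟨j.1, Finset.mem_compl.mpr h⟩) - σ m j.1 = v.1 j
        rw [dif_pos j.2]
        simp
    · -- right inverse
      rintro ⟨⟨c, m⟩, hp⟩
      apply Subtype.ext
      refine Prod.ext ?_ rfl
      funext i
      by_cases hi : i ∈ W
      · simp only [dif_pos hi]
        ring
      · simp only [dif_neg hi]
  have hcardS : Nat.card S = 2 ^ (r + δ + ρ) := by
    rw [← Nat.card_congr e, Nat.card_prod, Nat.card_prod, hcardU]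
    have h1 : Nat.card (Fin r → ZMod 2) = 2 ^ r := by
      rw [Nat.card_eq_fintype_card, Fintype.card_fun, ZMod.card, Fintype.card_fin]
    have h2 : Nat.card ((↥(Wᶜ) : Type) → ZMod 2) = 2 ^ δ := by
      rw [Nat.card_eq_fintype_card, Fintype.card_fun, ZMod.card, Fintype.card_coe,
        Finset.card_compl, Fintype.card_fin, hW]
      congr 1
      omega
    rw [h1, h2, ← pow_add, ← pow_add, Nat.add_assoc]
  have key : (Nat.card S : ℝ) =
      2 ^ (n + r) * (2 : ℝ) ^ ((ρ : ℤ) - ((n : ℤ) - (δ : ℤ))) := by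
    rw [hcardS]
    have h3 : (2 : ℝ) ^ (n + r) * (2 : ℝ) ^ ((ρ : ℤ) - ((n : ℤ) - (δ : ℤ)))
        = (2 : ℝ) ^ (((r + δ + ρ : ℕ) : ℤ)) := by
      rw [← zpow_natCast (2 : ℝ) (n + r), ← zpow_add₀ (by norm_num : (2 : ℝ) ≠ 0)]
      congr 1
      push_cast
      ring
    rw [h3, zpow_natCast]
    push_cast
    ring
  refine ⟨key, ?_⟩
  rw [key, mul_div_cancel_left₀]
  positivity
end

section
/- For each integer m ≥ 0 let Q_m = ∏_{j=m+1}^∞ (1 − 2^{−j}) (a convergent infinite product of real numbers). Then Q_m − Q_{m−1} = Q_m/2^m for every m ≥ 1, the series Σ_{m=1}^∞ (m/2^m) Q_m converges, and its sum is strictly less than 2. -/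
open Real

private lemma stmt7_hF (m k : ℕ) :
    1 - (2 : ℝ) ^ (-((m : ℤ) + 1 + (k : ℤ))) = 1 - (2 : ℝ)⁻¹ ^ (m + 1 + k) := by
  rw [show -((m : ℤ) + 1 + (k : ℤ)) = -((m + 1 + k : ℕ) : ℤ) by push_cast; ring,
    zpow_neg, zpow_natCast, ← inv_pow]

private lemma stmt7_pow_bounds (n : ℕ) (hn : 1 ≤ n) :
    0 < (2 : ℝ)⁻¹ ^ n ∧ (2 : ℝ)⁻¹ ^ n ≤ 1 / 2 := by
  constructor
  · positivity
  · calc (2 : ℝ)⁻¹ ^ n ≤ (2 : ℝ)⁻¹ ^ 1 :=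
        pow_le_pow_of_le_one (by norm_num) (by norm_num) hn
      _ = 1 / 2 := by norm_num

private lemma stmt7_factor_bounds (n : ℕ) (hn : 1 ≤ n) :
    1 / 2 ≤ 1 - (2 : ℝ)⁻¹ ^ n ∧ 1 - (2 : ℝ)⁻¹ ^ n < 1 := by
  obtain ⟨h1, h2⟩ := stmt7_pow_bounds n hn
  constructor <;> nlinarith

/-- `-log (1 - x) ≤ 2 x` for `0 ≤ x ≤ 1/2`. -/
private lemma stmt7_neg_log_le (x : ℝ) (hx0 : 0 ≤ x) (hx : x ≤ 1 / 2) :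
    -Real.log (1 - x) ≤ 2 * x := by
  have hpos : (0 : ℝ) < 1 - x := by linarith
  have h1 : Real.log (1 - x)⁻¹ ≤ (1 - x)⁻¹ - 1 :=
    Real.log_le_sub_one_of_pos (by positivity)
  rw [Real.log_inv] at h1
  have h2 : (1 - x)⁻¹ - 1 = x / (1 - x) := by field_simp; ring
  have h3 : x / (1 - x) ≤ 2 * x := by
    rw [div_le_iff₀ hpos]; nlinarith
  linarith [h1, h2 ▸ h1]

private lemma stmt7_summable_log (m : ℕ) :
    Summable fun k : ℕ => Real.log (1 - (2 : ℝ)⁻¹ ^ (m + 1 + k)) := by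
  rw [← summable_neg_iff]
  apply Summable.of_nonneg_of_le (f := fun k => 2 * (2 : ℝ)⁻¹ ^ (m + 1 + k))
  · intro k
    obtain ⟨h1, h2⟩ := stmt7_factor_bounds (m + 1 + k) (by omega)
    simp only [neg_nonneg]
    exact Real.log_nonpos (by linarith) (by linarith)
  · intro k
    exact stmt7_neg_log_le _ (le_of_lt (stmt7_pow_bounds (m+1+k) (by omega)).1)
      (stmt7_pow_bounds (m+1+k) (by omega)).2
  · apply Summable.mul_left
    apply Summable.comp_injective (summable_geometric_of_lt_one (by norm_num) (by norm_num))
    intro a b h; omega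

private lemma stmt7_multipliable (m : ℕ) :
    Multipliable fun k : ℕ => 1 - (2 : ℝ)⁻¹ ^ (m + 1 + k) := by
  have := Real.multipliable_of_summable_log
    (f := fun (k : ℕ) => 1 - (2 : ℝ)⁻¹ ^ (m + 1 + k))
    (fun k => by linarith [(stmt7_factor_bounds (m+1+k) (by omega)).1]) ?_
  · exact this
  · exact stmt7_summable_log m

private lemma stmt7_pos (m : ℕ) : 0 < ∏' k : ℕ, (1 - (2 : ℝ)⁻¹ ^ (m + 1 + k)) := by
  have := Real.rexp_tsum_eq_tprod
    (f := fun (k : ℕ) => 1 - (2 : ℝ)⁻¹ ^ (m + 1 + k))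
    (fun k => by linarith [(stmt7_factor_bounds (m+1+k) (by omega)).1])
    (stmt7_summable_log m)
  rw [← this]
  exact Real.exp_pos _

private lemma stmt7_le_one (m : ℕ) : ∏' k : ℕ, (1 - (2 : ℝ)⁻¹ ^ (m + 1 + k)) ≤ 1 := by
  apply hasProd_le_of_prod_le (stmt7_multipliable m).hasProd
  intro s
  apply Finset.prod_le_one
  · intro k _; linarith [(stmt7_factor_bounds (m+1+k) (by omega)).1]
  · intro k _; linarith [(stmt7_factor_bounds (m+1+k) (by omega)).2]

private lemma stmt7_rec (n : ℕ) :
    ∏' k : ℕ, (1 - (2 : ℝ)⁻¹ ^ (n + 1 + k)) =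
      (1 - (2 : ℝ)⁻¹ ^ (n + 1)) * ∏' k : ℕ, (1 - (2 : ℝ)⁻¹ ^ (n + 2 + k)) := by
  have hshift : (fun k : ℕ => 1 - (2 : ℝ)⁻¹ ^ (n + 1 + (k + 1))) =
      fun k : ℕ => 1 - (2 : ℝ)⁻¹ ^ (n + 2 + k) := by
    funext k; congr 2; omega
  have := tprod_eq_zero_mul' (f := fun k : ℕ => 1 - (2 : ℝ)⁻¹ ^ (n + 1 + k))
    (by rw [hshift]; exact stmt7_multipliable (n + 1))
  rw [this, hshift]

/-- with Q_m = ∏_{j=m+1}^∞ (1 − 2^{−j}), one has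
Q_m − Q_{m−1} = Q_m/2^m for m ≥ 1, the series Σ_{m≥1} (m/2^m) Q_m converges,
and its sum is strictly less than 2. -/
theorem stmt_7 (Q : ℕ → ℝ)
    (hQ : ∀ m : ℕ, Q m = ∏' k : ℕ, (1 - (2 : ℝ) ^ (-((m : ℤ) + 1 + (k : ℤ))))) :
    (∀ m : ℕ, 1 ≤ m → Q m - Q (m - 1) = Q m / 2 ^ m) ∧
    Summable (fun m : ℕ => ((m : ℝ) / 2 ^ m) * Q m) ∧
    (∑' m : ℕ, ((m : ℝ) / 2 ^ m) * Q m) < 2 := by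
  have hQ' : ∀ m : ℕ, Q m = ∏' k : ℕ, (1 - (2 : ℝ)⁻¹ ^ (m + 1 + k)) := by
    intro m; rw [hQ m]
    exact tprod_congr fun k => stmt7_hF m k
  have hQpos : ∀ m, 0 < Q m := fun m => (hQ' m) ▸ stmt7_pos m
  have hQle1 : ∀ m, Q m ≤ 1 := fun m => (hQ' m) ▸ stmt7_le_one m
  have hrec : ∀ n : ℕ, Q n = (1 - (2 : ℝ)⁻¹ ^ (n + 1)) * Q (n + 1) := by
    intro n
    rw [hQ' n, hQ' (n + 1), stmt7_rec n]
  refine ⟨?_, ?_, ?_⟩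
  · intro m hm
    obtain ⟨n, rfl⟩ : ∃ n, m = n + 1 := ⟨m - 1, by omega⟩
    have h := hrec n
    simp only [Nat.add_sub_cancel]
    rw [h]
    have h2 : (2 : ℝ)⁻¹ ^ (n + 1) = 1 / 2 ^ (n + 1) := by
      rw [inv_pow]; ring
    rw [h2]
    field_simp
    ring
  · apply Summable.of_nonneg_of_le (f := fun m : ℕ => (m : ℝ) * (1 / 2 : ℝ) ^ m)
    · intro m
      have := (hQpos m).le
      positivity
    · intro m
      have h1 : (m : ℝ) / 2 ^ m * Q m ≤ (m : ℝ) / 2 ^ m * 1 := by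
        apply mul_le_mul_of_nonneg_left (hQle1 m) (by positivity)
      calc (m : ℝ) / 2 ^ m * Q m ≤ (m : ℝ) / 2 ^ m := by linarith
        _ = (m : ℝ) * (1 / 2 : ℝ) ^ m := by rw [div_pow, one_pow]; ring
    · have := summable_pow_mul_geometric_of_norm_lt_one (R := ℝ) 1
        (r := 1 / 2) (by rw [norm_div]; simp; norm_num)
      simpa [pow_one] using this
  · have hsum2 : (∑' m : ℕ, (m : ℝ) * (1 / 2 : ℝ) ^ m) = 2 := by
      rw [tsum_coe_mul_geometric_of_norm_lt_one (by rw [norm_div]; simp; norm_num)]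
      norm_num
    have key : (∑' m : ℕ, ((m : ℝ) / 2 ^ m) * Q m) < ∑' m : ℕ, (m : ℝ) * (1 / 2 : ℝ) ^ m := by
      apply Summable.tsum_lt_tsum_of_nonneg (i := 1)
      · intro m
        have := (hQpos m).le
        positivity
      · intro m
        have h1 : (m : ℝ) / 2 ^ m * Q m ≤ (m : ℝ) / 2 ^ m * 1 :=
          mul_le_mul_of_nonneg_left (hQle1 m) (by positivity)
        calc (m : ℝ) / 2 ^ m * Q m ≤ (m : ℝ) / 2 ^ m := by linarith
          _ = (m : ℝ) * (1 / 2 : ℝ) ^ m := by rw [div_pow, one_pow]; ring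
      · -- strict at m = 1: need Q 1 < 1
        have hQ1 : Q 1 < 1 := by
          rw [hrec 1]
          have h2 := hQle1 2
          have h2' := (hQpos 2).le
          nlinarith [pow_pos (show (0:ℝ) < 2⁻¹ by norm_num) 2]
        have : ((1:ℕ) : ℝ) / 2 ^ (1:ℕ) * Q 1 < ((1:ℕ) : ℝ) * (1/2 : ℝ) ^ (1:ℕ) := by
          push_cast
          norm_num
          linarith
        exact this
      · have := summable_pow_mul_geometric_of_norm_lt_one (R := ℝ) 1
          (r := 1 / 2) (by rw [norm_div]; simp; norm_num)
        simpa [pow_one] using this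
    rwa [hsum2] at key
end

section
/- Let C be a binary linear [n, n−r] code with full-rank r×n parity-check matrix H, with d_{n−r}(C) = n, and let t be the MDS rank of C (the least t with d_t(C) = r + t). If δ ≥ t + r − 1, then the system [S] has a solution for every c ∈ F_2^n, every m ∈ F_2^r and every W ⊆ {1,…,n} with #W = n−δ. -/
/-- The t-th generalized Hamming weight of C: the minimum size of the support of
a t-dimensional subspace of C. -/
noncomputable def ghw (n : ℕ) (C : Submodule (ZMod 2) (Fin n → ZMod 2)) (t : ℕ) : ℕ :=
  sInf {k | ∃ L : Submodule (ZMod 2) (Fin n → ZMod 2), L ≤ C ∧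
    Module.finrank (ZMod 2) L = t ∧ Set.ncard {i : Fin n | ∃ x ∈ L, x i ≠ 0} = k}

open Module LinearMap

lemma aux_mem_ker {n : ℕ} (A : Finset (Fin n)) (x : Fin n → ZMod 2) :
    x ∈ ker (funLeft (ZMod 2) (ZMod 2) ((↑) : ↥A → Fin n)) ↔ ∀ j ∈ A, x j = 0 := by
  simp [LinearMap.mem_ker, funext_iff, Subtype.forall]

lemma aux_ker_finrank {n : ℕ} (A : Finset (Fin n)) :
    finrank (ZMod 2) (ker (funLeft (ZMod 2) (ZMod 2) ((↑) : ↥A → Fin n))) = n - A.card := by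
  have hsurj : Function.Surjective (funLeft (ZMod 2) (ZMod 2) ((↑) : ↥A → Fin n)) :=
    LinearMap.funLeft_surjective_of_injective _ _ _ Subtype.val_injective
  have h := (funLeft (ZMod 2) (ZMod 2) ((↑) : ↥A → Fin n)).finrank_range_add_finrank_ker
  rw [LinearMap.range_eq_top.2 hsurj] at h
  rw [finrank_top] at h
  simp only [Module.finrank_fintype_fun_eq_card, Fintype.card_coe, Fintype.card_fin] at h
  omega

lemma aux_exists_sub {n s : ℕ} (M : Submodule (ZMod 2) (Fin n → ZMod 2))
    (hs : s ≤ finrank (ZMod 2) M) :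
    ∃ L : Submodule (ZMod 2) (Fin n → ZMod 2), L ≤ M ∧ finrank (ZMod 2) L = s := by
  obtain ⟨f, hf⟩ := exists_linearIndependent_of_le_finrank (R := ZMod 2) (M := ↥M) hs
  have hind : LinearIndependent (ZMod 2) (M.subtype ∘ f) := hf.map' M.subtype (Submodule.ker_subtype M)
  refine ⟨Submodule.span _ (Set.range (M.subtype ∘ f)), ?_, ?_⟩
  · rw [Submodule.span_le]
    rintro _ ⟨i, rfl⟩
    exact (f i).2
  · rw [finrank_span_eq_card hind, Fintype.card_fin]

lemma aux_ghw_mem {n s : ℕ} (C M : Submodule (ZMod 2) (Fin n → ZMod 2)) (hMC : M ≤ C)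
    (hs : s ≤ finrank (ZMod 2) M) :
    ∃ k, (∃ L : Submodule (ZMod 2) (Fin n → ZMod 2), L ≤ C ∧
        Module.finrank (ZMod 2) L = s ∧ Set.ncard {i : Fin n | ∃ x ∈ L, x i ≠ 0} = k)
      ∧ k ≤ Set.ncard {i : Fin n | ∃ x ∈ M, x i ≠ 0} := by
  obtain ⟨L, hLM, hLr⟩ := aux_exists_sub M hs
  refine ⟨_, ⟨L, hLM.trans hMC, hLr, rfl⟩, ?_⟩
  exact Set.ncard_le_ncard (fun i ⟨x, hx, hxi⟩ => ⟨x, hLM hx, hxi⟩) (Set.toFinite _)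

lemma aux_inf_finrank {n : ℕ} (L K : Submodule (ZMod 2) (Fin n → ZMod 2)) :
    Module.finrank (ZMod 2) L + Module.finrank (ZMod 2) K
      ≤ n + Module.finrank (ZMod 2) ↥(L ⊓ K) := by
  have h1 := Submodule.finrank_sup_add_finrank_inf_eq L K
  have h2 : Module.finrank (ZMod 2) ↥(L ⊔ K) ≤ n := by
    simpa using Submodule.finrank_le (L ⊔ K)
  omega

lemma aux_mono {n r t : ℕ} (C : Submodule (ZMod 2) (Fin n → ZMod 2))
    (ht : IsLeast {s : ℕ | ghw n C s = r + s} t) :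
    ∀ s, t ≤ s → ∀ k, (∃ L : Submodule (ZMod 2) (Fin n → ZMod 2), L ≤ C ∧
      Module.finrank (ZMod 2) L = s ∧ Set.ncard {i : Fin n | ∃ x ∈ L, x i ≠ 0} = k) → r + s ≤ k := by
  intro s hts
  induction s, hts using Nat.le_induction with
  | base =>
    intro k hk
    have h := Nat.sInf_le (show k ∈ {k | ∃ L : Submodule (ZMod 2) (Fin n → ZMod 2), L ≤ C ∧
      Module.finrank (ZMod 2) L = t ∧ Set.ncard {i : Fin n | ∃ x ∈ L, x i ≠ 0} = k} from hk)
    have h2 := ht.1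
    rw [Set.mem_setOf_eq, ghw] at h2
    rwa [h2] at h
  | succ s hs IH =>
    rintro k ⟨L, hLC, hLr, hLk⟩
    have hL0 : ∃ x ∈ L, x ≠ 0 := by
      by_contra hc
      push_neg at hc
      have hb : L = ⊥ := by
        rw [Submodule.eq_bot_iff]; exact hc
      rw [hb, finrank_bot] at hLr
      exact absurd hLr.symm (Nat.succ_ne_zero s)
    obtain ⟨x, hxL, hx0⟩ := hL0
    obtain ⟨i, hxi⟩ : ∃ i, x i ≠ 0 := by
      by_contra hc
      push_neg at hc
      exact hx0 (funext hc)
    have hiS : i ∈ {j | ∃ x ∈ L, x j ≠ 0} := ⟨x, hxL, hxi⟩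
    have key : ∀ M : Submodule (ZMod 2) (Fin n → ZMod 2), M ≤ L → (∀ y ∈ M, y i = 0) →
        s ≤ Module.finrank (ZMod 2) M → r + (s + 1) ≤ k := by
      intro M hML hMi hMfin
      obtain ⟨k', hk'mem, hk'le⟩ := aux_ghw_mem C M (hML.trans hLC) hMfin
      have hk'low := IH k' hk'mem
      have hsub : {j | ∃ x ∈ M, x j ≠ 0} ⊆ {j | ∃ x ∈ L, x j ≠ 0} \ {i} := by
        rintro j ⟨y, hyM, hyj⟩
        refine ⟨⟨y, hML hyM, hyj⟩, ?_⟩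
        rintro rfl
        exact hyj (hMi y hyM)
      have hdiff : ({j | ∃ x ∈ L, x j ≠ 0} \ {i}).ncard = k - 1 := by
        rw [Set.ncard_diff_singleton_of_mem hiS, hLk]
      have hk1 : 1 ≤ k := by
        rw [← hLk]
        exact (Set.ncard_pos (Set.toFinite _)).2 ⟨i, hiS⟩
      have h6 : k' ≤ k - 1 :=
        hk'le.trans ((Set.ncard_le_ncard hsub (Set.toFinite _)).trans hdiff.le)
      clear * - hk'low h6 hk1
      omega
    refine key (L ⊓ ker (funLeft (ZMod 2) (ZMod 2) ((↑) : ↥({i} : Finset (Fin n)) → Fin n)))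
      inf_le_left (fun y hy => ((aux_mem_ker _ y).1 hy.2) i (Finset.mem_singleton_self i)) ?_
    have h3 := aux_ker_finrank ({i} : Finset (Fin n))
    rw [Finset.card_singleton] at h3
    have h5 := aux_inf_finrank L
      (ker (funLeft (ZMod 2) (ZMod 2) ((↑) : ↥({i} : Finset (Fin n)) → Fin n)))
    rw [h3, hLr] at h5
    have h4 : s + 1 ≤ n := by
      have h4' := Submodule.finrank_le L
      simp only [Module.finrank_fintype_fun_eq_card, Fintype.card_fin] at h4'
      rw [hLr] at h4'
      exact h4'
    have h7 : n + s ≤ n + Module.finrank (ZMod 2)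
        ↥(L ⊓ ker (funLeft (ZMod 2) (ZMod 2) ((↑) : ↥({i} : Finset (Fin n)) → Fin n))) := by
      calc n + s = s + 1 + (n - 1) := by clear * - h4; omega
      _ ≤ _ := h5
    exact Nat.le_of_add_le_add_left h7

/-- if C has d_{n−r}(C) = n and MDS rank t (the least t with
d_t(C) = r + t), and δ ≥ t + r − 1, then the system [S] has a solution for every
c, m and every W with #W = n − δ. -/
theorem stmt_9 (n r δ : ℕ) (hδ : δ ≤ n)
    (C : Submodule (ZMod 2) (Fin n → ZMod 2))
    (hdim : Module.finrank (ZMod 2) C = n - r)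
    (H : Matrix (Fin r) (Fin n) (ZMod 2)) (hHrank : H.rank = r)
    (hHC : ∀ x : Fin n → ZMod 2, x ∈ C ↔ H.mulVec x = 0)
    (hlast : ghw n C (n - r) = n)
    (t : ℕ) (ht : IsLeast {s : ℕ | ghw n C s = r + s} t)
    (hδt : δ ≥ t + r - 1) :
    ∀ (c : Fin n → ZMod 2) (m : Fin r → ZMod 2) (W : Finset (Fin n)), W.card = n - δ →
      ∃ x : Fin n → ZMod 2, H.mulVec x = m ∧ ∀ i ∈ W, x i = c i := by
  intro c m W hW
  have hrn : r ≤ n := by rw [← hHrank]; exact Matrix.rank_le_width H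
  have hrange : LinearMap.range H.mulVecLin = ⊤ := by
    apply Submodule.eq_top_of_finrank_eq
    rw [Module.finrank_fintype_fun_eq_card, Fintype.card_fin]
    exact hHrank
  have hRtop : Submodule.map H.mulVecLin
      (ker (funLeft (ZMod 2) (ZMod 2) ((↑) : ↥W → Fin n))) = ⊤ := by
    by_contra hne
    obtain ⟨φ, hφ0, hφ⟩ := Submodule.exists_dual_map_eq_bot_of_lt_top
      (lt_top_iff_ne_top.2 hne) inferInstance
    set ψ : (Fin n → ZMod 2) →ₗ[ZMod 2] ZMod 2 := φ.comp H.mulVecLin with hψdef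
    have hψ : ∀ x : Fin n → ZMod 2,
        ψ x = ∑ j, x j * ψ (fun j' => if j = j' then 1 else 0) := by
      intro x
      rw [LinearMap.pi_apply_eq_sum_univ ψ x]
      simp [smul_eq_mul]
    have hK0ψ : ∀ y ∈ ker (funLeft (ZMod 2) (ZMod 2) ((↑) : ↥W → Fin n)), ψ y = 0 := by
      intro y hy
      have hm : φ (H.mulVecLin y) ∈ Submodule.map φ (Submodule.map H.mulVecLin
          (ker (funLeft (ZMod 2) (ZMod 2) ((↑) : ↥W → Fin n)))) :=
        Submodule.mem_map_of_mem (Submodule.mem_map_of_mem hy)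
      rw [hφ] at hm
      simpa [hψdef] using hm
    have hzW : ∀ j, j ∉ W → ψ (fun j' => if j = j' then 1 else 0) = 0 := by
      intro j hj
      apply hK0ψ
      rw [aux_mem_ker]
      intro j' hj'
      exact if_neg (fun h => hj (by rw [h]; exact hj'))
    obtain ⟨v, hv⟩ : ∃ v, φ v ≠ 0 := by
      by_contra hc
      push_neg at hc
      exact hφ0 (LinearMap.ext fun v => by rw [hc v]; rfl)
    obtain ⟨xv, rfl⟩ : ∃ x, H.mulVecLin x = v := by
      have : v ∈ LinearMap.range H.mulVecLin := by rw [hrange]; trivial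
      exact this
    obtain ⟨i, hzi⟩ : ∃ i, ψ (fun j' => if i = j' then 1 else 0) ≠ 0 := by
      by_contra hc
      push_neg at hc
      apply hv
      have : ψ xv = 0 := by rw [hψ xv]; simp [hc]
      exact this
    have hiW : i ∈ W := by
      by_contra hc
      exact hzi (hzW i hc)
    have hCz : ∀ x ∈ C, ∑ j, x j * ψ (fun j' => if j = j' then 1 else 0) = 0 := by
      intro x hx
      rw [← hψ x]
      show φ (H.mulVecLin x) = 0
      rw [Matrix.mulVecLin_apply, (hHC x).1 hx, map_zero]
    -- the shortened space
    have hMW : ∀ x ∈ C ⊓ ker (funLeft (ZMod 2) (ZMod 2) ((↑) : ↥(W.erase i) → Fin n)),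
        ∀ j ∈ W, x j = 0 := by
      intro x hx j hj
      by_cases hji : j = i
      · subst hji
        have hsum : ∑ j', x j' * ψ (fun j'' => if j' = j'' then 1 else 0)
            = x j * ψ (fun j'' => if j = j'' then 1 else 0) := by
          apply Finset.sum_eq_single
          · intro b _ hb
            by_cases hbW : b ∈ W
            · rw [(aux_mem_ker _ x).1 hx.2 b (Finset.mem_erase.2 ⟨hb, hbW⟩), zero_mul]
            · rw [hzW b hbW, mul_zero]
          · intro h
            exact absurd (Finset.mem_univ j) h
        have h0 : x j * ψ (fun j'' => if j = j'' then 1 else 0) = 0 :=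
          hsum ▸ hCz x hx.1
        rcases mul_eq_zero.1 h0 with h | h
        · exact h
        · exact absurd h hzi
      · exact (aux_mem_ker _ x).1 hx.2 j (Finset.mem_erase.2 ⟨hji, hj⟩)
    have hrδ : r ≤ δ := by
      rcases Nat.eq_zero_or_pos t with h0 | h1
      · have h2 := ht.1
        rw [Set.mem_setOf_eq, h0] at h2
        have h3 : ghw n C 0 = 0 := by
          apply Nat.eq_zero_of_le_zero
          apply Nat.sInf_le
          refine ⟨⊥, bot_le, finrank_bot _ _, ?_⟩
          have : {i : Fin n | ∃ x ∈ (⊥ : Submodule (ZMod 2) (Fin n → ZMod 2)), x i ≠ 0}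
              = ∅ := by
            ext j
            simp
          rw [this, Set.ncard_empty]
        rw [h3] at h2
        clear * - h2 hδt h0
        omega
      · clear * - hδt h1
        omega
    have hWpos : 1 ≤ W.card := Finset.card_pos.2 ⟨i, hiW⟩
    have hA : (W.erase i).card = n - δ - 1 := by
      rw [Finset.card_erase_of_mem hiW, hW]
    have h3 := aux_ker_finrank (W.erase i)
    rw [hA] at h3
    have h5 := aux_inf_finrank C
      (ker (funLeft (ZMod 2) (ZMod 2) ((↑) : ↥(W.erase i) → Fin n)))
    rw [h3, hdim] at h5
    have hMfin : δ + 1 - r ≤ Module.finrank (ZMod 2)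
        ↥(C ⊓ ker (funLeft (ZMod 2) (ZMod 2) ((↑) : ↥(W.erase i) → Fin n))) := by
      have h6 : n + (δ + 1 - r) ≤ n - r + (n - (n - δ - 1)) := by
        clear * - hrn hδ hW hWpos hrδ
        omega
      exact Nat.le_of_add_le_add_left (h6.trans h5)
    obtain ⟨k, hkmem, hkle⟩ := aux_ghw_mem C
      (C ⊓ ker (funLeft (ZMod 2) (ZMod 2) ((↑) : ↥(W.erase i) → Fin n)))
      inf_le_left hMfin
    have hklow := aux_mono C ht (δ + 1 - r) (by clear * - hδt hrδ; omega) k hkmem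
    have hsub : {j : Fin n | ∃ x ∈ C ⊓ ker (funLeft (ZMod 2) (ZMod 2)
        ((↑) : ↥(W.erase i) → Fin n)), x j ≠ 0} ⊆ (↑W : Set (Fin n))ᶜ := by
      rintro j ⟨x, hx, hxj⟩ hjW
      exact hxj (hMW x hx j hjW)
    have hup := Set.ncard_le_ncard hsub (Set.toFinite _)
    rw [← Finset.coe_compl, Set.ncard_coe_finset, Finset.card_compl, Fintype.card_fin] at hup
    have hkup : k ≤ n - W.card := hkle.trans hup
    clear * - hklow hkup hW hδ hrδ hWpos
    omega
  have hm' : m - H.mulVec c ∈ Submodule.map H.mulVecLin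
      (ker (funLeft (ZMod 2) (ZMod 2) ((↑) : ↥W → Fin n))) := by
    rw [hRtop]; trivial
  obtain ⟨y, hyK, hy⟩ := hm'
  refine ⟨c + y, ?_, ?_⟩
  · rw [Matrix.mulVec_add]
    rw [Matrix.mulVecLin_apply] at hy
    rw [hy]
    abel
  · intro j hj
    have := (aux_mem_ker W y).1 hyK j hj
    simp [this]
end

section
/- Let C be a binary linear [n, n−r] code with generator matrix G, and suppose that d_t(C) > δ ≥ r for some integer t with δ − r ≤ t ≤ n − r. Then for every set W ⊆ {1,…,n} with #W = n−δ one has rank(G_W) ≥ n − δ − t + 1. -/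
lemma exists_submodule_finrank_eq' {K V : Type*} [Field K] [AddCommGroup V] [Module K V]
    [FiniteDimensional K V] {t : ℕ} (h : t ≤ Module.finrank K V) :
    ∃ L : Submodule K V, Module.finrank K L = t := by
  let b := Module.finBasis K V
  have hli : LinearIndependent K (b ∘ Fin.castLE h) :=
    b.linearIndependent.comp _ (Fin.castLE_injective h)
  refine ⟨Submodule.span K (Set.range (b ∘ Fin.castLE h)), ?_⟩
  rw [finrank_span_eq_card hli, Fintype.card_fin]

/-- if d_t(C) > δ ≥ r for some t with δ − r ≤ t ≤ n − r, then for
every W with #W = n − δ one has rank(G_W) ≥ n − δ − t + 1. -/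
theorem stmt_10 (n r δ t : ℕ)
    (C : Submodule (ZMod 2) (Fin n → ZMod 2))
    (hdim : Module.finrank (ZMod 2) C = n - r)
    (G : Matrix (Fin (n - r)) (Fin n) (ZMod 2))
    (hind : LinearIndependent (ZMod 2) (fun i => G i))
    (hspan : Submodule.span (ZMod 2) (Set.range fun i => G i) = C)
    (hrδ : r ≤ δ) (ht1 : δ - r ≤ t) (ht2 : t ≤ n - r)
    (hdt : ghw n C t > δ) :
    ∀ W : Finset (Fin n), W.card = n - δ →
      (G.submatrix id (fun j : W => j.1)).rank ≥ n - δ - t + 1 := by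
  intro W hW
  by_contra hlt
  push_neg at hlt
  set M : Matrix (Fin (n - r)) W (ZMod 2) := G.submatrix id (fun j : W => j.1) with hM
  have hrank : M.rank ≤ n - δ - t := by omega
  set π : (Fin n → ZMod 2) →ₗ[ZMod 2] (W → ZMod 2) :=
    LinearMap.funLeft (ZMod 2) (ZMod 2) (fun j : W => (j : Fin n)) with hπ
  have hcomp : (fun i => M i) = π ∘ (fun i => G i) := rfl
  have himg : C.map π = Submodule.span (ZMod 2) (Set.range fun i => M i) := by
    rw [hcomp, Set.range_comp, ← Submodule.map_span, hspan]
  have hspanM : Submodule.span (ZMod 2) (Set.range fun i => M i)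
      = LinearMap.range (Matrix.transpose M).mulVecLin := by
    exact (Matrix.range_mulVecLin (Matrix.transpose M)).symm
  have hrk2 : Module.finrank (ZMod 2) ↥(C.map π) = M.rank := by
    rw [himg, hspanM, ← Matrix.rank_transpose M]
    rfl
  set f : ↥C →ₗ[ZMod 2] (W → ZMod 2) := π.comp C.subtype with hf
  have hrange : LinearMap.range f = C.map π := by
    rw [hf, LinearMap.range_comp, Submodule.range_subtype]
  have hsum := LinearMap.finrank_range_add_finrank_ker f
  rw [hrange, hdim, hrk2] at hsum
  have hker : t ≤ Module.finrank (ZMod 2) ↥(LinearMap.ker f) := by omega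
  obtain ⟨L₀, hL₀⟩ := exists_submodule_finrank_eq' (K := ZMod 2) (V := ↥(LinearMap.ker f)) hker
  set L : Submodule (ZMod 2) (Fin n → ZMod 2) :=
    ((L₀.map (LinearMap.ker f).subtype).map C.subtype) with hL
  have hLC : L ≤ C := Submodule.map_subtype_le C _
  have hLrk : Module.finrank (ZMod 2) ↥L = t := by
    rw [hL, Submodule.finrank_map_subtype_eq, Submodule.finrank_map_subtype_eq, hL₀]
  have hvanish : ∀ x ∈ L, ∀ j : W, x (j : Fin n) = 0 := by
    rintro x ⟨y, hy, rfl⟩ j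
    have hyk : y ∈ LinearMap.ker f := Submodule.map_subtype_le _ _ hy
    have h0 : π (y : Fin n → ZMod 2) = 0 := LinearMap.mem_ker.mp hyk
    exact congrFun h0 j
  set S := {i : Fin n | ∃ x ∈ L, x i ≠ 0} with hSdef
  have hS : S ⊆ (↑W : Set (Fin n))ᶜ := by
    rintro i ⟨x, hx, hxi⟩ hiW
    exact hxi (hvanish x hx ⟨i, hiW⟩)
  have hcard : S.ncard ≤ δ := by
    have h1 : S.ncard ≤ ((↑W : Set (Fin n))ᶜ).ncard :=
      Set.ncard_le_ncard hS (Set.toFinite _)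
    have h2 : ((↑W : Set (Fin n))ᶜ).ncard = (Wᶜ : Finset (Fin n)).card := by
      rw [← Finset.coe_compl, Set.ncard_coe_finset]
    have h3 : (Wᶜ : Finset (Fin n)).card = n - W.card := by
      rw [Finset.card_compl, Fintype.card_fin]
    omega
  have hghw : ghw n C t ≤ S.ncard := Nat.sInf_le ⟨L, hLC, hLrk, rfl⟩
  omega
end

section
/- Let C = {(a, σ(a)) : a ∈ F_2^u} ⊆ F_2^n be a code systematic at the first u positions, let dec be any decoding map for C, and define emb(c, m) = (0, m) + dec(c − (0, m)) for c ∈ F_2^n, m ∈ F_2^{n−u}. Then the average number of embedding changes equals the average radius of C: (1/2^{n + (n−u)}) · Σ_{c ∈ F_2^n} Σ_{m ∈ F_2^{n−u}} d(c, emb(c, m)) = ρ̃(C), where ρ̃(C) = 2^{−n} Σ_{x ∈ F_2^n} d(x, C). -/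
/-- Hamming distance on F_2^u × F_2^v (i.e. on F_2^n split into two blocks). -/
noncomputable def pdist (u v : ℕ) (x y : (Fin u → ZMod 2) × (Fin v → ZMod 2)) : ℕ :=
  hammingDist x.1 y.1 + hammingDist x.2 y.2

/-- Hamming distance from a vector to a code. -/
noncomputable def pdistTo (u v : ℕ) (x : (Fin u → ZMod 2) × (Fin v → ZMod 2))
    (D : Set ((Fin u → ZMod 2) × (Fin v → ZMod 2))) : ℕ :=
  sInf {k | ∃ c ∈ D, pdist u v x c = k}

/-- the average number of embedding changes of the stegoscheme
emb(c, m) = (0, m) + dec(c − (0, m)) equals the average radius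
ρ̃(C) = 2^{−n} Σ_x d(x, C) of C (here n = u + v and the message length is
n − u = v). -/
theorem stmt_15 (u v : ℕ)
    (σ : (Fin u → ZMod 2) → (Fin v → ZMod 2))
    (C : Set ((Fin u → ZMod 2) × (Fin v → ZMod 2)))
    (hC : C = Set.range fun a : Fin u → ZMod 2 => (a, σ a))
    (dec : (Fin u → ZMod 2) × (Fin v → ZMod 2) → (Fin u → ZMod 2) × (Fin v → ZMod 2))
    (hdec_mem : ∀ x, dec x ∈ C)
    (hdec_dist : ∀ x, pdist u v x (dec x) = pdistTo u v x C)
    (emb : (Fin u → ZMod 2) × (Fin v → ZMod 2) → (Fin v → ZMod 2) →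
      (Fin u → ZMod 2) × (Fin v → ZMod 2))
    (hemb : ∀ c m, emb c m = ((0 : Fin u → ZMod 2), m) + dec (c - ((0 : Fin u → ZMod 2), m))) :
    (∑ c : (Fin u → ZMod 2) × (Fin v → ZMod 2), ∑ m : Fin v → ZMod 2,
        (pdist u v c (emb c m) : ℝ)) / 2 ^ (u + v + v) =
      (∑ x : (Fin u → ZMod 2) × (Fin v → ZMod 2), (pdistTo u v x C : ℝ)) / 2 ^ (u + v) := by
  have key : ∀ c m, pdist u v c (emb c m)
      = pdistTo u v (c - ((0 : Fin u → ZMod 2), m)) C := by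
    intro c m
    rw [hemb, ← hdec_dist]
    set y := dec (c - ((0 : Fin u → ZMod 2), m)) with hy
    simp only [pdist, hammingDist_eq_hammingNorm]
    congr 2 <;>
      · simp only [Prod.fst_add, Prod.snd_add, Prod.fst_sub, Prod.snd_sub]; abel
  have inner : ∀ m : Fin v → ZMod 2,
      ∑ c : (Fin u → ZMod 2) × (Fin v → ZMod 2), (pdist u v c (emb c m) : ℝ)
        = ∑ x : (Fin u → ZMod 2) × (Fin v → ZMod 2), (pdistTo u v x C : ℝ) := by
    intro m
    simp only [key]
    exact Fintype.sum_equiv (Equiv.subRight ((0 : Fin u → ZMod 2), m)) _ _ (fun _ => rfl)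
  rw [Finset.sum_comm]
  simp only [inner, Finset.sum_const, Finset.card_univ, nsmul_eq_mul]
  have hcard : (Fintype.card (Fin v → ZMod 2) : ℝ) = 2 ^ v := by
    simp [Fintype.card_fun]
  rw [hcard, pow_add (2:ℝ) (u+v) v]
  have : (2:ℝ) ^ v ≠ 0 := by positivity
  field_simp
end
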